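/- Let Π ⊊ Σ_k be a proper subshift and T : Π → Σ_k the map constructed from Π. Then for every y ∈ Π, the set of weak* limit points of the empirical measures of T(y) coincides with that of y: V(T(y), σ) = V(y, σ). -/

import Mathlib

open Filter Topology MeasureTheory

/-- Upper density of a set of naturals. -/
noncomputable def upperDensity (S : Set ℕ) : ℝ :=
  Filter.limsup (fun n => ((S ∩ Set.Iio n).ncard : ℝ) / n) Filter.atTop

/-- Lower density of a set of naturals. -/
noncomputable def lowerDensity (S : Set ℕ) : ℝ :=
  Filter.liminf (fun n => ((S ∩ Set.Iio n).ncard : ℝ) / n) Filter.atTop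

/-- Banach upper density: limsup over the interval length of the maximal
proportion of `S` in an interval of that length. -/
noncomputable def banachUpperDensity (S : Set ℕ) : ℝ :=
  Filter.limsup (fun N => ⨆ a : ℕ, ((S ∩ Set.Ico a (a + N)).ncard : ℝ) / N) Filter.atTop

/-- Banach lower density. -/
noncomputable def banachLowerDensity (S : Set ℕ) : ℝ :=
  Filter.liminf (fun N => ⨅ a : ℕ, ((S ∩ Set.Ico a (a + N)).ncard : ℝ) / N) Filter.atTop

/-- The shift map on the full shift `Σ_k = {0, …, k-1}^ℕ`. -/
def shift {k : ℕ} (x : ℕ → Fin k) : ℕ → Fin k := fun n => x (n + 1)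

/-- The metric `d(x,y) = Σ_{n ≥ 1} δ(x_n, y_n)/2^n` on `Σ_k` (sequences indexed from `0`). -/
noncomputable def shiftDist {k : ℕ} (x y : ℕ → Fin k) : ℝ :=
  ∑' n : ℕ, if x n = y n then 0 else (1 / 2) ^ (n + 1)

/-- The open ball `B_ε(x)` for the metric `shiftDist`. -/
def sball {k : ℕ} (x : ℕ → Fin k) (ε : ℝ) : Set (ℕ → Fin k) := {y | shiftDist x y < ε}

/-- `N(x, U) = {n ≥ 1 : σ^n(x) ∈ U}`. -/
def visits {k : ℕ} (x : ℕ → Fin k) (U : Set (ℕ → Fin k)) : Set ℕ :=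
  {n | 1 ≤ n ∧ shift^[n] x ∈ U}

/-- A point is recurrent if `N(x, B_ε(x)) ≠ ∅` for every `ε > 0`. -/
def Recurrent {k : ℕ} (x : ℕ → Fin k) : Prop := ∀ ε > (0 : ℝ), (visits x (sball x ε)).Nonempty

/-- A point is Banach recurrent if `N(x, B_ε(x))` has positive Banach upper density
for every `ε > 0`. -/
def BanachRecurrent {k : ℕ} (x : ℕ → Fin k) : Prop :=
  ∀ ε > (0 : ℝ), 0 < banachUpperDensity (visits x (sball x ε))

/-- Statistical ω-limit set w.r.t. a density notion `ξ`:
`ω_ξ(x) = {y : ξ(N(x, B_ε(y))) > 0 for all ε > 0}`. -/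
def statOmega {k : ℕ} (ξ : Set ℕ → ℝ) (x : ℕ → Fin k) : Set (ℕ → Fin k) :=
  {y | ∀ ε > (0 : ℝ), 0 < ξ (visits x (sball y ε))}

/-- The usual ω-limit set of `x` under the shift. -/
def omegaLim {k : ℕ} (x : ℕ → Fin k) : Set (ℕ → Fin k) :=
  {y | ∀ ε > (0 : ℝ), ∀ N : ℕ, ∃ n ≥ N, shift^[n] x ∈ sball y ε}

/-- Density of a subset of `Σ_k` w.r.t. the metric `shiftDist`. -/
def ShiftDense {k : ℕ} (A : Set (ℕ → Fin k)) : Prop :=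
  ∀ x : ℕ → Fin k, ∀ ε > (0 : ℝ), ∃ y ∈ A, shiftDist x y < ε

/-- Closure of a subset of `Σ_k` w.r.t. the metric `shiftDist`. -/
def shiftClosure {k : ℕ} (A : Set (ℕ → Fin k)) : Set (ℕ → Fin k) :=
  {z | ∀ ε > (0 : ℝ), ∃ y ∈ A, shiftDist z y < ε}

/-- `Φ^{(n)}_{xy}(t)`: the proportion of times `0 ≤ i < n` with `d(σ^i x, σ^i y) < t`. -/
noncomputable def PhiN {k : ℕ} (x y : ℕ → Fin k) (n : ℕ) (t : ℝ) : ℝ :=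
  (({i | i < n ∧ shiftDist (shift^[i] x) (shift^[i] y) < t}).ncard : ℝ) / n

/-- A pair is DC1 (distributionally chaotic of type 1) if `Φ_{xy}(s) = 0` for some `s > 0`
and `Φ*_{xy}(t) = 1` for all `t > 0`. -/
def DC1Pair {k : ℕ} (x y : ℕ → Fin k) : Prop :=
  (∃ s > (0 : ℝ), Filter.liminf (fun n => PhiN x y n s) Filter.atTop = 0) ∧
  (∀ t > (0 : ℝ), Filter.limsup (fun n => PhiN x y n t) Filter.atTop = 1)

/-- A set with at least two points is DC1-scrambled if every pair of distinct points is DC1. -/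
def DC1Scrambled {k : ℕ} (S : Set (ℕ → Fin k)) : Prop :=
  S.Nontrivial ∧ ∀ x ∈ S, ∀ y ∈ S, x ≠ y → DC1Pair x y

/-- `strictOrEq true A B` means `A ⊊ B`; `strictOrEq false A B` means `A = B`. -/
def strictOrEq {α : Type*} (b : Bool) (A B : Set α) : Prop := if b then A ⊂ B else A = B

/-- The patterns of (strict ⊊ = `true` / equality = `false`) for the three inclusions
`ω_{B_*} ⊆ ω_{d̲} ⊆ ω_{d̄} ⊆ ω_{B*}` in Cases (1)–(6). -/
def caseFlags : Fin 6 → Bool × Bool × Bool :=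
  ![(true, false, false), (true, false, true), (false, true, false),
    (true, true, false), (false, true, true), (true, true, true)]

/-- `x` satisfies Case (i), i = 1,…,6: the chain
`ω_{B_*}(x) ⊆ ω_{d̲}(x) ⊆ ω_{d̄}(x) ⊆ ω_{B*}(x) = ω_σ(x)` with strictness pattern given by
`caseFlags i`, and the last inclusion an equality. -/
def SatCase {k : ℕ} (i : Fin 6) (x : ℕ → Fin k) : Prop :=
  strictOrEq (caseFlags i).1 (statOmega banachLowerDensity x) (statOmega lowerDensity x) ∧
  strictOrEq (caseFlags i).2.1 (statOmega lowerDensity x) (statOmega upperDensity x) ∧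
  strictOrEq (caseFlags i).2.2 (statOmega upperDensity x) (statOmega banachUpperDensity x) ∧
  statOmega banachUpperDensity x = omegaLim x

/-- `x` satisfies Case (i'), i = 1,…,6: as in Case (i) but the last inclusion
`ω_{B*}(x) ⊆ ω_σ(x)` is strict. -/
def SatCase' {k : ℕ} (i : Fin 6) (x : ℕ → Fin k) : Prop :=
  strictOrEq (caseFlags i).1 (statOmega banachLowerDensity x) (statOmega lowerDensity x) ∧
  strictOrEq (caseFlags i).2.1 (statOmega lowerDensity x) (statOmega upperDensity x) ∧
  strictOrEq (caseFlags i).2.2 (statOmega upperDensity x) (statOmega banachUpperDensity x) ∧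
  statOmega banachUpperDensity x ⊂ omegaLim x
/-- A subshift: a nonempty, closed (w.r.t. the metric `shiftDist`), shift-invariant subset. -/
def IsSubshift {k : ℕ} (P : Set (ℕ → Fin k)) : Prop :=
  P.Nonempty ∧ shiftClosure P ⊆ P ∧ ∀ x ∈ P, shift x ∈ P

/-- The first `n` symbols of `y` as a finite word. -/
def prefixWord {k : ℕ} (y : ℕ → Fin k) (n : ℕ) : List (Fin k) :=
  List.ofFn (fun i : Fin n => y i)

/-- A finite word occurs in (the language of) `P` if it is the initial word of
some point of `P`. -/
def IsWordIn {k : ℕ} (w : List (Fin k)) (P : Set (ℕ → Fin k)) : Prop :=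
  ∃ x ∈ P, ∀ i : Fin w.length, x i = w.get i

/-- Data for the construction of the map `T`: an enumeration `C` of all (nonempty) finite
words of the subshift `P`, and a nonempty finite word `A1` not occurring in `P`. -/
structure TData (k : ℕ) (P : Set (ℕ → Fin k)) where
  C : ℕ → List (Fin k)
  A1 : List (Fin k)
  A1_ne : A1 ≠ []
  A1_not : ¬ IsWordIn A1 P
  C_in : ∀ n, IsWordIn (C n) P
  C_surj : ∀ w : List (Fin k), w ≠ [] → IsWordIn w P → ∃ n, C n = w

/-- The words `A_n` of the construction (indexed from `0`, so `TData.A y 0` is the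
paper's `A_1`): `A_{n+1} = A_n B_n A_n`, where `B_n = C_n Y_n ⋯ Y_n` consists of the
word `C_n` followed by `|A_n|²` copies of the initial word `Y_n` of `y` (paper's `Y_n`,
of length `n`, is `prefixWord y (n+1)` in our `0`-based indexing). -/
def TData.A {k : ℕ} {P : Set (ℕ → Fin k)} (D : TData k P) (y : ℕ → Fin k) :
    ℕ → List (Fin k)
  | 0 => D.A1
  | n + 1 =>
      D.A y n ++
        (D.C n ++ (List.replicate ((D.A y n).length ^ 2) (prefixWord y (n + 1))).flatten) ++
        D.A y n

/-- The requirement `|C_n| = o(|A_n|)` as `n → ∞`. -/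
def TData.Small {k : ℕ} {P : Set (ℕ → Fin k)} (D : TData k P) : Prop :=
  ∀ y : ℕ → Fin k,
    Filter.Tendsto (fun n => ((D.C n).length : ℝ) / ((D.A y n).length))
      Filter.atTop (nhds 0)

/-- The map `T`: `T(y) = lim_n A_n` is the sequence whose `i`-th symbol is the `i`-th
symbol of `A_n` for every large `n` (the words `A_n` are nested prefixes of each other,
and `|A_{i+1}| > i`, so the `i`-th symbol of `A_{i+1}` is well defined). -/
def TData.T {k : ℕ} {P : Set (ℕ → Fin k)} (D : TData k P) (y : ℕ → Fin k) : ℕ → Fin k :=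
  fun i => if h : i < (D.A y (i + 1)).length then (D.A y (i + 1)).get ⟨i, h⟩ else y i
/-- The support of a measure on `Σ_k` w.r.t. the metric `shiftDist`. -/
def msupp {k : ℕ} (μ : MeasureTheory.Measure (ℕ → Fin k)) : Set (ℕ → Fin k) :=
  {z | ∀ ε > (0 : ℝ), 0 < μ (sball z ε)}

/-- The set `M(Λ, σ)` of shift-invariant Borel probability measures giving full
measure to `Λ`. -/
def invMeasures {k : ℕ} (Λ : Set (ℕ → Fin k)) : Set (MeasureTheory.Measure (ℕ → Fin k)) :=
  {μ | MeasureTheory.IsProbabilityMeasure μ ∧ μ.map shift = μ ∧ μ Λ = 1}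

/-- `V(x, σ)`: the set of weak* limit points of the sequence of empirical measures
`(1/n) Σ_{i<n} δ_{σ^i x}` of `x`, i.e. probability measures `μ` such that along some
subsequence the Birkhoff averages of every continuous function converge to `∫ g dμ`. -/
def VSet {k : ℕ} (x : ℕ → Fin k) : Set (MeasureTheory.Measure (ℕ → Fin k)) :=
  {μ | MeasureTheory.IsProbabilityMeasure μ ∧ ∃ φ : ℕ → ℕ, StrictMono φ ∧
    ∀ g : C(ℕ → Fin k, ℝ),
      Filter.Tendsto (fun j => (∑ i ∈ Finset.range (φ j), g (shift^[i] x)) / (φ j : ℝ))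
        Filter.atTop (nhds (∫ z, g z ∂μ))}


/-!
Write `a_n = |A_n|`. The word `A_{m+1} = A_m C_m Y_m ⋯ Y_m A_m` is, up to a proportion
`O((a_m + |C_m|) / a_{m+1})` that tends to `0`, made of `a_m²` copies of `Y_m = y_0 ⋯ y_m`.
A continuous `g` on `Σ_k` depends up to `ε` only on finitely many coordinates, so along such a
block the Birkhoff sums of `g` at `T(y)` are those of the periodic orbit of `Y_m`, whose average
is the average of `g` over the first `m + 1` points of the orbit of `y`. For
`a_{m+1} < N ≤ a_{m+2}`, the prefix of length `N` of `T(y)` is covered up to a vanishing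
proportion by the `Y_m`-block of `A_{m+1}` and the beginning of the `Y_{m+1}`-block of
`A_{m+2}`; the squared number of repetitions makes the final copy of `A_{m+1}` negligible.
Hence the `N`-th Birkhoff average at `T(y)` is asymptotic to the `(m + 2)`-nd one at `y`.
Since `n ↦ a_n` is strictly increasing, the two sequences of empirical measures then have the
same subsequential limits.
-/

section Birkhoff

variable {α : Type*} (f : α → α) {g : α → ℝ}

theorem abs_birkhoffSum_le {G : ℝ} (hG : ∀ x, |g x| ≤ G) (n : ℕ) (x : α) :
    |birkhoffSum f g n x| ≤ n * G :=
  (Finset.abs_sum_le_sum_abs _ _).trans <| by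
    simpa using Finset.sum_le_card_nsmul (Finset.range n) _ _ fun i _ => hG (f^[i] x)

theorem sum_Ico_eq_birkhoffSum (s n : ℕ) (x : α) :
    ∑ i ∈ Finset.Ico s (s + n), g (f^[i] x) = birkhoffSum f g n (f^[s] x) := by
  rw [Finset.sum_Ico_eq_sum_range, Nat.add_sub_cancel_left, birkhoffSum]
  simp_rw [add_comm s, Function.iterate_add_apply]

theorem abs_birkhoffSum_sub_le {ε : ℝ} {n : ℕ} {x z : α}
    (h : ∀ j < n, |g (f^[j] x) - g (f^[j] z)| ≤ ε) :
    |birkhoffSum f g n x - birkhoffSum f g n z| ≤ n * ε := by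
  rw [birkhoffSum, birkhoffSum, ← Finset.sum_sub_distrib]
  refine (Finset.abs_sum_le_sum_abs _ _).trans ?_
  simpa using Finset.sum_le_card_nsmul (Finset.range n) _ _ fun j hj => h j (Finset.mem_range.1 hj)

theorem abs_birkhoffSum_div_sub_birkhoffSum_succ_div_le {G : ℝ} (hG : ∀ x, |g x| ≤ G)
    (n : ℕ) (x : α) :
    |birkhoffSum f g n x / n - birkhoffSum f g (n + 1) x / (n + 1 : ℕ)| ≤ 2 * G / (n + 1) := by
  rcases n.eq_zero_or_pos with rfl | hn
  · simpa [birkhoffSum_one] using (hG x).trans (by linarith [(abs_nonneg _).trans (hG x)])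
  have hn' : (0 : ℝ) < n := Nat.cast_pos.2 hn
  have key : birkhoffSum f g n x / n - birkhoffSum f g (n + 1) x / (n + 1 : ℕ)
      = (birkhoffSum f g n x - n * g (f^[n] x)) / n / (n + 1) := by
    rw [birkhoffSum_succ]; push_cast; field_simp; ring
  rw [key, abs_div, abs_div, abs_of_pos hn', abs_of_pos (by positivity : (0 : ℝ) < n + 1)]
  gcongr
  rw [div_le_iff₀ hn']
  calc |birkhoffSum f g n x - n * g (f^[n] x)|
      ≤ |birkhoffSum f g n x| + |n * g (f^[n] x)| := abs_sub _ _
    _ ≤ n * G + n * G := by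
      rw [abs_mul, Nat.abs_cast]
      gcongr
      exacts [abs_birkhoffSum_le f hG n x, hG _]
    _ = 2 * G * n := by ring

end Birkhoff

section Shift

variable {k : ℕ}

theorem shift_iterate_apply (x : ℕ → Fin k) (n i : ℕ) : shift^[n] x i = x (i + n) := by
  induction n generalizing x with
  | zero => rfl
  | succ n ih => rw [Function.iterate_succ_apply, ih]; rfl

theorem ContinuousMap.exists_abs_sub_le_of_forall_lt_eq (g : C(ℕ → Fin k, ℝ)) {ε : ℝ}
    (hε : 0 < ε) :
    ∃ L : ℕ, ∀ x x' : ℕ → Fin k, (∀ t < L, x t = x' t) → |g x - g x'| ≤ ε := by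
  -- this metric induces the product topology, so Heine–Cantor applies to it
  let _ : MetricSpace (ℕ → Fin k) := PiNat.metricSpace
  obtain ⟨δ, hδ, hgδ⟩ := Metric.uniformContinuous_iff.1
    (CompactSpace.uniformContinuous_of_continuous g.continuous) ε hε
  obtain ⟨L, hL⟩ := exists_pow_lt_of_lt_one hδ one_half_lt_one
  refine ⟨L, fun x x' h => (hgδ ?_).le⟩
  exact (PiNat.mem_cylinder_iff_dist_le.1 (PiNat.mem_cylinder_iff.2 h)).trans_lt hL

variable {g : (ℕ → Fin k) → ℝ} {G ε : ℝ} {L : ℕ}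

theorem abs_birkhoffSum_shift_sub_le_of_forall_lt_eq (hG : ∀ x, |g x| ≤ G)
    (hL : ∀ x x', (∀ t < L, x t = x' t) → |g x - g x'| ≤ ε) {p : ℕ} {x z : ℕ → Fin k}
    (hxz : ∀ i < p, x i = z i) :
    |birkhoffSum shift g p x - birkhoffSum shift g p z| ≤ p * ε + 2 * G * L := by
  have hε : 0 ≤ ε := by simpa using hL x x fun _ _ => rfl
  have hG0 : 0 ≤ G := (abs_nonneg _).trans (hG x)
  obtain ⟨r, hr, hp⟩ : ∃ r ≤ L, p = (p - L) + r := ⟨p - (p - L), by omega, by omega⟩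
  have hhead : |birkhoffSum shift g (p - L) x - birkhoffSum shift g (p - L) z|
      ≤ (p - L : ℕ) * ε := by
    refine abs_birkhoffSum_sub_le shift fun j hj => hL _ _ fun t ht => ?_
    rw [shift_iterate_apply, shift_iterate_apply, hxz _ (by omega)]
  have htail : ∀ w : ℕ → Fin k, |birkhoffSum shift g r w| ≤ r * G :=
    abs_birkhoffSum_le shift hG r
  rw [hp, birkhoffSum_add, birkhoffSum_add]
  have hcast : ((p - L : ℕ) : ℝ) ≤ p := by exact_mod_cast Nat.sub_le p L
  have hrL : (r : ℝ) ≤ L := by exact_mod_cast hr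
  calc _ ≤ |birkhoffSum shift g (p - L) x - birkhoffSum shift g (p - L) z|
        + (|birkhoffSum shift g r (shift^[p - L] x)|
          + |birkhoffSum shift g r (shift^[p - L] z)|) := by
        rw [add_sub_add_comm]
        exact (abs_add_le _ _).trans (by gcongr; exact abs_sub _ _)
    _ ≤ (p - L : ℕ) * ε + (r * G + r * G) := add_le_add hhead (add_le_add (htail _) (htail _))
    _ ≤ ((p - L : ℕ) + r : ℕ) * ε + 2 * G * L := by push_cast; nlinarith

theorem abs_birkhoffSum_shift_mul_sub_le_of_periodic (hG : ∀ x, |g x| ≤ G)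
    (hL : ∀ x x', (∀ t < L, x t = x' t) → |g x - g x'| ≤ ε) {p q : ℕ} {x z : ℕ → Fin k}
    (hxz : ∀ i < q * p, x i = z (i % p)) :
    |birkhoffSum shift g (q * p) x - q * birkhoffSum shift g p z| ≤ q * (p * ε + 2 * G * L) := by
  induction q with
  | zero => simp
  | succ q ih =>
    have hper : ∀ i < p, shift^[q * p] x i = z i := fun i hi => by
      rw [shift_iterate_apply, hxz _ (by nlinarith), Nat.add_mul_mod_self_right,
        Nat.mod_eq_of_lt hi]
    have hhead := ih fun i hi => hxz i (by nlinarith)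
    have hlast := abs_birkhoffSum_shift_sub_le_of_forall_lt_eq hG hL hper
    rw [Nat.succ_mul, birkhoffSum_add]
    push_cast
    calc _ = |(birkhoffSum shift g (q * p) x - q * birkhoffSum shift g p z)
          + (birkhoffSum shift g p (shift^[q * p] x) - birkhoffSum shift g p z)| := by
          congr 1; ring
      _ ≤ _ := (abs_add_le _ _).trans (by linarith)

theorem abs_birkhoffSum_shift_sub_le_of_periodic (hG : ∀ x, |g x| ≤ G)
    (hL : ∀ x x', (∀ t < L, x t = x' t) → |g x - g x'| ≤ ε) {p n : ℕ} (hp : 0 < p)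
    {x z : ℕ → Fin k} (hxz : ∀ i < n, x i = z (i % p)) :
    |birkhoffSum shift g n x - n * (birkhoffSum shift g p z / p)|
      ≤ n * (ε + 2 * G * L / p) + 2 * p * G := by
  have hε : 0 ≤ ε := by simpa using hL x x fun _ _ => rfl
  have hG0 : 0 ≤ G := (abs_nonneg _).trans (hG x)
  have hp' : (0 : ℝ) < p := Nat.cast_pos.2 hp
  obtain ⟨q, r, hr, rfl⟩ : ∃ q r, r < p ∧ n = q * p + r :=
    ⟨n / p, n % p, Nat.mod_lt _ hp, (Nat.div_add_mod' n p).symm⟩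
  have hfull := abs_birkhoffSum_shift_mul_sub_le_of_periodic hG hL (q := q) fun i hi =>
    hxz i (by omega)
  have hrest := abs_birkhoffSum_le shift hG r (shift^[q * p] x)
  have havg : |birkhoffSum shift g p z / p| ≤ G := by
    rw [abs_div, Nat.abs_cast, div_le_iff₀ hp', mul_comm]
    exact abs_birkhoffSum_le shift hG p z
  have hr' : (r : ℝ) ≤ p := by exact_mod_cast hr.le
  rw [birkhoffSum_add]
  push_cast
  calc _ = |(birkhoffSum shift g (q * p) x - q * birkhoffSum shift g p z)
        + (birkhoffSum shift g r (shift^[q * p] x) - r * (birkhoffSum shift g p z / p))| := by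
        congr 1; field_simp; ring
    _ ≤ q * (p * ε + 2 * G * L) + (r * G + r * G) := by
        refine (abs_add_le _ _).trans
          (add_le_add hfull ((abs_sub _ _).trans (add_le_add hrest ?_)))
        rw [abs_mul, Nat.abs_cast]
        exact mul_le_mul_of_nonneg_left havg r.cast_nonneg
    _ ≤ _ := by
        have : (q * p + r : ℝ) * (ε + 2 * G * L / p) = q * (p * ε + 2 * G * L)
            + r * (ε + 2 * G * L / p) := by field_simp
        rw [this]
        have : 0 ≤ r * (ε + 2 * G * L / p) := by positivity
        nlinarith

end Shift

theorem abs_sum_sub_card_mul_le_of_subset {ι : Type*} [DecidableEq ι] {f : ι → ℝ} {G c : ℝ}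
    (hf : ∀ i, |f i| ≤ G) (hc : |c| ≤ G) {F s : Finset ι} (hF : F ⊆ s) :
    |∑ i ∈ s, f i - s.card * c| ≤ |∑ i ∈ F, f i - F.card * c| + 2 * G * (s.card - F.card) := by
  have hcard : ((s \ F).card : ℝ) = s.card - F.card := by
    rw [Finset.card_sdiff_of_subset hF, Nat.cast_sub (Finset.card_le_card hF)]
  have hrest : |∑ i ∈ s \ F, f i - (s \ F).card * c| ≤ (s \ F).card * (2 * G) := by
    rw [← nsmul_eq_mul, ← Finset.sum_const, ← Finset.sum_sub_distrib]
    refine (Finset.abs_sum_le_sum_abs _ _).trans ?_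
    simpa using Finset.sum_le_card_nsmul (s \ F) (fun i => |f i - c|) (2 * G) fun i _ =>
      (abs_sub _ _).trans (by linarith [hf i])
  rw [hcard] at hrest
  rw [← Finset.sum_sdiff hF]
  calc _ = |(∑ i ∈ s \ F, f i - (s.card - F.card) * c) + (∑ i ∈ F, f i - F.card * c)| := by
        ring_nf
    _ ≤ _ := by
        refine (abs_add_le _ _).trans ?_
        linarith

theorem exists_subseq_tendsto_iff_of_tendsto_sub {ι : Type*} {A B : ι → ℕ → ℝ} {c : ι → ℝ}
    {ℓ a : ℕ → ℕ} (ha : StrictMono a) (hℓa : ∀ n, ℓ (a n) = n) (hℓ : Tendsto ℓ atTop atTop)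
    (hAB : ∀ i, Tendsto (fun N => A i N - B i (ℓ N)) atTop (𝓝 0)) :
    (∃ φ : ℕ → ℕ, StrictMono φ ∧ ∀ i, Tendsto (fun j => A i (φ j)) atTop (𝓝 (c i))) ↔
      ∃ φ : ℕ → ℕ, StrictMono φ ∧ ∀ i, Tendsto (fun j => B i (φ j)) atTop (𝓝 (c i)) := by
  constructor
  · rintro ⟨φ, hφ, hA⟩
    obtain ⟨ψ, hψ, hℓψ⟩ := strictMono_subseq_of_tendsto_atTop (hℓ.comp hφ.tendsto_atTop)
    refine ⟨ℓ ∘ φ ∘ ψ, hℓψ, fun i => ?_⟩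
    have := ((hA i).comp hψ.tendsto_atTop).sub ((hAB i).comp (hφ.comp hψ).tendsto_atTop)
    simpa [Function.comp_def] using this
  · rintro ⟨φ, hφ, hB⟩
    refine ⟨a ∘ φ, ha.comp hφ, fun i => ?_⟩
    have := ((hAB i).comp (ha.comp hφ).tendsto_atTop).add (hB i)
    simpa [Function.comp_def, hℓa] using this

namespace TData

variable {k : ℕ} {P : Set (ℕ → Fin k)} (D : TData k P) (y : ℕ → Fin k)

def lenA (n : ℕ) : ℕ := (D.A y n).length

/-- Position in `A_{m+1} = A_m C_m Y_m ⋯ Y_m A_m` where the copies of `Y_m` start. -/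
def blockStart (m : ℕ) : ℕ := D.lenA y m + (D.C m).length

def blockLen (m : ℕ) : ℕ := D.lenA y m ^ 2 * (m + 1)

theorem lenA_succ (m : ℕ) :
    D.lenA y (m + 1) = D.blockStart y m + D.blockLen y m + D.lenA y m := by
  simp [lenA, blockStart, blockLen, TData.A, prefixWord]
  ring

theorem succ_le_lenA (n : ℕ) : n + 1 ≤ D.lenA y n := by
  induction n with
  | zero => exact List.length_pos_iff.2 D.A1_ne
  | succ n ih => rw [lenA_succ, blockLen]; nlinarith

theorem strictMono_lenA : StrictMono (D.lenA y) :=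
  strictMono_nat_of_lt_succ fun n => by
    rw [lenA_succ, blockLen]; nlinarith [D.succ_le_lenA y n]

theorem A_prefix_A {m n : ℕ} (h : m ≤ n) : D.A y m <+: D.A y n := by
  induction n, h using Nat.le_induction with
  | base => exact List.prefix_rfl
  | succ n _ ih =>
    refine ih.trans ?_
    simp only [TData.A, List.append_assoc]
    exact List.prefix_append _ _

theorem T_apply_of_lt {n i : ℕ} (h : i < D.lenA y n) : D.T y i = (D.A y n)[i] := by
  have hi : i < (D.A y (i + 1)).length := by
    have := D.succ_le_lenA y (i + 1); rw [lenA] at this; omega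
  rw [TData.T, dif_pos hi]
  rcases le_total n (i + 1) with hn | hn
  · exact ((D.A_prefix_A y hn).getElem h).symm
  · exact (D.A_prefix_A y hn).getElem hi

theorem shift_iterate_T_apply {m i : ℕ} (hi : i < D.blockLen y m) :
    shift^[D.blockStart y m] (D.T y) i = y (i % (m + 1)) := by
  have hlt : i + D.blockStart y m < D.lenA y (m + 1) := by rw [lenA_succ]; omega
  rw [shift_iterate_apply, D.T_apply_of_lt y hlt]
  unfold blockLen lenA at hi
  unfold blockStart lenA
  simp only [TData.A, prefixWord, ← List.ofFn_fin_repeat]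
  rw [List.getElem_append_left (by simp; omega), List.getElem_append_right (by omega),
    List.getElem_append_right (by omega)]
  simp only [List.getElem_ofFn, Fin.repeat_apply, Fin.coe_modNat]
  congr 2
  omega

theorem exists_le_lenA (N : ℕ) : ∃ n, N ≤ D.lenA y n :=
  ⟨N, N.le_succ.trans (D.succ_le_lenA y N)⟩

def level (N : ℕ) : ℕ := Nat.find (D.exists_le_lenA y N)

theorem le_lenA_level (N : ℕ) : N ≤ D.lenA y (D.level y N) :=
  Nat.find_spec (D.exists_le_lenA y N)

theorem lenA_lt_of_lt_level {n N : ℕ} (h : n < D.level y N) : D.lenA y n < N :=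
  not_le.1 (Nat.find_min (D.exists_le_lenA y N) h)

theorem lt_level_of_lenA_lt {n N : ℕ} (h : D.lenA y n < N) : n < D.level y N :=
  (D.strictMono_lenA y).lt_iff_lt.1 (h.trans_le (D.le_lenA_level y N))

theorem level_lenA (n : ℕ) : D.level y (D.lenA y n) = n :=
  le_antisymm (Nat.find_min' _ le_rfl)
    ((D.strictMono_lenA y).le_iff_le.1 (D.le_lenA_level y _))

theorem tendsto_level : Tendsto (D.level y) atTop atTop :=
  tendsto_atTop_atTop.2 fun n => ⟨D.lenA y n + 1, fun _ hN => (D.lt_level_of_lenA_lt y hN).le⟩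

/-- For `|A_{m+1}| < N ≤ |A_{m+2}|`, `N * gapRatio m` bounds the number of positions below `N`
outside the blocks of copies of `Y_m` and `Y_{m+1}`, plus the boundary errors of both blocks. -/
noncomputable def gapRatio (m : ℕ) : ℝ :=
  (6 * D.lenA y m + (D.C m).length + (D.C (m + 1)).length : ℕ) / D.lenA y (m + 1)

theorem tendsto_gapRatio
    (hD : Tendsto (fun n => ((D.C n).length : ℝ) / (D.A y n).length) atTop (𝓝 0)) :
    Tendsto (D.gapRatio y) atTop (𝓝 0) := by
  have hbound : Tendsto (fun m : ℕ => 6 * (1 / ((m : ℝ) + 1))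
      + ((D.C m).length : ℝ) / D.lenA y m + ((D.C (m + 1)).length : ℝ) / D.lenA y (m + 1))
      atTop (𝓝 0) := by
    simpa [lenA] using ((tendsto_one_div_add_atTop_nhds_zero_nat.const_mul 6).add hD).add
      (hD.comp (tendsto_add_atTop_nat 1))
  refine tendsto_of_tendsto_of_tendsto_of_le_of_le tendsto_const_nhds hbound
    (fun m => by unfold gapRatio; positivity) fun m => ?_
  have ha : (0 : ℝ) < D.lenA y m := by exact_mod_cast (m.succ_pos.trans_le (D.succ_le_lenA y m))
  have hma : ((m : ℝ) + 1) * D.lenA y m ≤ D.lenA y (m + 1) := by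
    have h1 := D.succ_le_lenA y m
    have : (m + 1) * D.lenA y m ≤ D.lenA y (m + 1) := by
      rw [lenA_succ, blockLen]; nlinarith
    exact_mod_cast this
  have haa' : (D.lenA y m : ℝ) ≤ D.lenA y (m + 1) :=
    (le_mul_of_one_le_left ha.le (by linarith [m.cast_nonneg (α := ℝ)])).trans hma
  have ha' : (0 : ℝ) < D.lenA y (m + 1) := ha.trans_le haa'
  calc D.gapRatio y m = 6 * (D.lenA y m / D.lenA y (m + 1)) + (D.C m).length / D.lenA y (m + 1)
        + (D.C (m + 1)).length / D.lenA y (m + 1) := by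
        unfold gapRatio; push_cast; ring
    _ ≤ _ := by
        have h6 : (D.lenA y m : ℝ) / D.lenA y (m + 1) ≤ 1 / ((m : ℝ) + 1) := by
          rw [div_le_div_iff₀ ha' (by positivity)]; linarith
        have hC : ((D.C m).length : ℝ) / D.lenA y (m + 1) ≤ (D.C m).length / D.lenA y m :=
          div_le_div_of_nonneg_left (Nat.cast_nonneg _) ha haa'
        linarith

theorem sub_add_le_mul_gapRatio {m N n : ℕ} (hN : D.lenA y (m + 1) < N)
    (hN' : N ≤ D.lenA y (m + 2))
    (hn : n = min (N - D.blockStart y (m + 1)) (D.blockLen y (m + 1))) :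
    (N : ℝ) - (D.blockLen y m + n : ℕ) + (2 * m + 3) ≤ N * D.gapRatio y m := by
  have e₁ := D.lenA_succ y m
  have e₂ : D.lenA y (m + 2) = _ := D.lenA_succ y (m + 1)
  have ha := D.succ_le_lenA y m
  have hw' : D.lenA y (m + 1) * D.lenA y (m + 1) ≤ D.blockLen y (m + 1) := by
    rw [blockLen]; nlinarith
  unfold blockStart at e₁ e₂ hn
  -- past the block of copies of `Y_{m+1}`, `N ≥ |A_{m+1}|^2` absorbs the at most `|A_{m+1}|`
  -- remaining symbols
  have htail : (N - (D.lenA y (m + 1) + (D.C (m + 1)).length + D.blockLen y (m + 1)))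
      * D.lenA y (m + 1) ≤ N * D.lenA y m := by
    rcases le_or_gt N (D.lenA y (m + 1) + (D.C (m + 1)).length + D.blockLen y (m + 1)) with h | h
    · simp [Nat.sub_eq_zero_of_le h]
    · calc _ ≤ D.lenA y (m + 1) * D.lenA y (m + 1) := Nat.mul_le_mul_right _ (by omega)
        _ ≤ N * 1 := by omega
        _ ≤ N * D.lenA y m := Nat.mul_le_mul_left _ (by omega)
  have hcount : (N - (D.blockLen y m + n) + (2 * m + 3)) * D.lenA y (m + 1)
      ≤ N * (6 * D.lenA y m + (D.C m).length + (D.C (m + 1)).length) :=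
    calc _ ≤ (5 * D.lenA y m + (D.C m).length + (D.C (m + 1)).length
          + (N - (D.lenA y (m + 1) + (D.C (m + 1)).length + D.blockLen y (m + 1))))
          * D.lenA y (m + 1) := Nat.mul_le_mul_right _ (by omega)
      _ ≤ (5 * D.lenA y m + (D.C m).length + (D.C (m + 1)).length) * N + N * D.lenA y m := by
          rw [add_mul]; exact add_le_add (Nat.mul_le_mul_left _ hN.le) htail
      _ = _ := by ring
  have ha' : (0 : ℝ) < D.lenA y (m + 1) := by
    exact_mod_cast (Nat.succ_pos _).trans_le (D.succ_le_lenA y _)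
  rw [gapRatio, mul_div_assoc', le_div_iff₀ ha']
  have := (Nat.cast_le (α := ℝ)).2 hcount
  push_cast [Nat.cast_sub (show D.blockLen y m + n ≤ N by omega)] at this ⊢
  linarith

variable {g : (ℕ → Fin k) → ℝ} {G ε : ℝ} {L : ℕ}

theorem abs_birkhoffSum_T_block_sub_le (hG : ∀ x, |g x| ≤ G)
    (hL : ∀ x x', (∀ t < L, x t = x' t) → |g x - g x'| ≤ ε) {m n : ℕ}
    (hn : n ≤ D.blockLen y m) :
    |birkhoffSum shift g n (shift^[D.blockStart y m] (D.T y))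
        - n * (birkhoffSum shift g (m + 1) y / (m + 1 : ℕ))|
      ≤ n * (ε + 2 * G * L / (m + 1 : ℕ)) + 2 * (m + 1 : ℕ) * G :=
  abs_birkhoffSum_shift_sub_le_of_periodic hG hL m.succ_pos fun _ hi =>
    D.shift_iterate_T_apply y (hi.trans_le hn)

theorem abs_birkhoffSum_blocks_sub_le (hG : ∀ x, |g x| ≤ G)
    (hL : ∀ x x', (∀ t < L, x t = x' t) → |g x - g x'| ≤ ε) {m n : ℕ}
    (hn : n ≤ D.blockLen y (m + 1)) :
    |birkhoffSum shift g (D.blockLen y m) (shift^[D.blockStart y m] (D.T y))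
        + birkhoffSum shift g n (shift^[D.blockStart y (m + 1)] (D.T y))
        - (D.blockLen y m + n : ℕ) * (birkhoffSum shift g (m + 2) y / (m + 2 : ℕ))|
      ≤ (D.blockLen y m + n : ℕ) * (ε + 2 * G * (L + 1) / (m + 1)) + 2 * G * (2 * m + 3) := by
  have hG0 : 0 ≤ G := (abs_nonneg _).trans (hG y)
  have h₁ := D.abs_birkhoffSum_T_block_sub_le y hG hL (m := m) le_rfl
  have h₂ := D.abs_birkhoffSum_T_block_sub_le y hG hL hn
  have h₁₂ := abs_birkhoffSum_div_sub_birkhoffSum_succ_div_le shift hG (m + 1) y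
  rw [show m + 1 + 1 = m + 2 from rfl] at h₂ h₁₂
  push_cast at h₁ h₂ h₁₂ ⊢
  rw [show (m : ℝ) + 1 + 1 = m + 2 by ring] at h₁₂
  set β₀ := birkhoffSum shift g (m + 1) y / ((m : ℝ) + 1)
  set β := birkhoffSum shift g (m + 2) y / ((m : ℝ) + 2)
  set w : ℝ := (D.blockLen y m : ℝ)
  have hw : 0 ≤ w := Nat.cast_nonneg _
  have hm' : (m : ℝ) + 1 ≤ m + 2 := by linarith
  have hκ₁ : ε + 2 * G * L / (m + 1) + 2 * G / (m + 2) ≤ ε + 2 * G * (L + 1) / (m + 1) := by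
    have : 2 * G / (m + 2) ≤ 2 * G / (m + 1) := by gcongr
    linarith [show 2 * G * (L + 1) / (m + 1) = 2 * G * L / (m + 1) + 2 * G / (m + 1) by ring]
  have hκ₂ : ε + 2 * G * L / (m + 2) ≤ ε + 2 * G * (L + 1) / (m + 1) := by
    have : 2 * G * L / (m + 2) ≤ 2 * G * (L + 1) / (m + 1) := by gcongr; linarith
    linarith
  calc _ = |(birkhoffSum shift g (D.blockLen y m) (shift^[D.blockStart y m] (D.T y)) - w * β₀)
        + w * (β₀ - β)
        + (birkhoffSum shift g n (shift^[D.blockStart y (m + 1)] (D.T y)) - n * β)| := by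
        ring_nf
    _ ≤ _ + w * |β₀ - β| + _ := by
        refine (abs_add_three _ _ _).trans_eq ?_
        rw [abs_mul, abs_of_nonneg hw]
    _ ≤ (w * (ε + 2 * G * L / (m + 1)) + 2 * (m + 1) * G) + w * (2 * G / (m + 2))
        + (n * (ε + 2 * G * L / (m + 2)) + 2 * (m + 2) * G) := by gcongr
    _ ≤ _ := by
        nlinarith [mul_le_mul_of_nonneg_left hκ₁ hw,
          mul_le_mul_of_nonneg_left hκ₂ (Nat.cast_nonneg (α := ℝ) n)]

theorem abs_birkhoffSum_T_div_sub_le (hG : ∀ x, |g x| ≤ G)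
    (hL : ∀ x x', (∀ t < L, x t = x' t) → |g x - g x'| ≤ ε) {m N : ℕ}
    (hN : D.lenA y (m + 1) < N) (hN' : N ≤ D.lenA y (m + 2)) :
    |birkhoffSum shift g N (D.T y) / N - birkhoffSum shift g (m + 2) y / (m + 2 : ℕ)|
      ≤ ε + 2 * G * (L + 1) / (m + 1) + 2 * G * D.gapRatio y m := by
  have hε : 0 ≤ ε := by simpa using hL y y fun _ _ => rfl
  have hG0 : 0 ≤ G := (abs_nonneg _).trans (hG y)
  have e₁ : D.lenA y (m + 1) = D.lenA y m + (D.C m).length + D.blockLen y m + D.lenA y m :=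
    D.lenA_succ y m
  obtain ⟨n, hn⟩ : ∃ n, n = min (N - D.blockStart y (m + 1)) (D.blockLen y (m + 1)) := ⟨_, rfl⟩
  have hle : D.blockLen y m + n ≤ N := by unfold blockStart at hn; omega
  set F₁ := Finset.Ico (D.blockStart y m) (D.blockStart y m + D.blockLen y m)
  set F₂ := Finset.Ico (D.blockStart y (m + 1)) (D.blockStart y (m + 1) + n)
  have hdisj : Disjoint F₁ F₂ := by
    rw [Finset.disjoint_left]; intro i; simp only [F₁, F₂, Finset.mem_Ico, blockStart]; omega
  have hsub : F₁ ∪ F₂ ⊆ Finset.range N := by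
    intro i
    simp only [F₁, F₂, Finset.mem_union, Finset.mem_Ico, Finset.mem_range, blockStart] at hn ⊢
    omega
  set β := birkhoffSum shift g (m + 2) y / (m + 2 : ℕ)
  have hβ : |β| ≤ G := by
    rw [abs_div, Nat.abs_cast, div_le_iff₀ (by positivity), mul_comm]
    exact abs_birkhoffSum_le shift hG _ y
  have hsum := abs_sum_sub_card_mul_le_of_subset (f := fun i => g (shift^[i] (D.T y)))
    (fun _ => hG _) hβ hsub
  rw [Finset.sum_union hdisj, Finset.card_union_of_disjoint hdisj, sum_Ico_eq_birkhoffSum,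
    sum_Ico_eq_birkhoffSum, Nat.card_Ico, Nat.card_Ico, Finset.card_range,
    Nat.add_sub_cancel_left, Nat.add_sub_cancel_left] at hsum
  have hblocks := D.abs_birkhoffSum_blocks_sub_le y hG hL (hn ▸ min_le_right _ _)
  have hgap := D.sub_add_le_mul_gapRatio y hN hN' hn
  have hN0 : (0 : ℝ) < N := by exact_mod_cast Nat.zero_lt_of_lt hN
  have hwn : ((D.blockLen y m + n : ℕ) : ℝ) ≤ N := by exact_mod_cast hle
  have hκ : 0 ≤ ε + 2 * G * (L + 1) / (m + 1) := by positivity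
  rw [show birkhoffSum shift g N (D.T y) / N - β = (birkhoffSum shift g N (D.T y) - N * β) / N by
    field_simp, abs_div, abs_of_pos hN0, div_le_iff₀ hN0]
  calc _ ≤ _ := hsum
    _ ≤ (D.blockLen y m + n : ℕ) * (ε + 2 * G * (L + 1) / (m + 1)) + 2 * G * (2 * m + 3)
        + 2 * G * (N - (D.blockLen y m + n : ℕ)) := by gcongr
    _ ≤ N * (ε + 2 * G * (L + 1) / (m + 1))
        + 2 * G * (N - (D.blockLen y m + n : ℕ) + (2 * m + 3)) := by nlinarith
    _ ≤ N * (ε + 2 * G * (L + 1) / (m + 1)) + 2 * G * (N * D.gapRatio y m) := by gcongr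
    _ = _ := by ring

theorem tendsto_birkhoffSum_T_div_sub_birkhoffSum_level_div
    (hD : Tendsto (fun n => ((D.C n).length : ℝ) / (D.A y n).length) atTop (𝓝 0))
    (g : C(ℕ → Fin k, ℝ)) :
    Tendsto (fun N => birkhoffSum shift g N (D.T y) / N
      - birkhoffSum shift g (D.level y N) y / D.level y N) atTop (𝓝 0) := by
  rw [Metric.tendsto_atTop]
  intro ε hε
  obtain ⟨L, hL⟩ := g.exists_abs_sub_le_of_forall_lt_eq (half_pos hε)
  have hG : ∀ x, |g x| ≤ ‖g‖ := fun x => by simpa using g.norm_coe_le_norm x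
  have herr : Tendsto (fun m : ℕ => 2 * ‖g‖ * (L + 1) / ((m : ℝ) + 1)
      + 2 * ‖g‖ * D.gapRatio y m) atTop (𝓝 0) := by
    simpa [div_eq_mul_inv] using (tendsto_one_div_add_atTop_nhds_zero_nat.const_mul
      (2 * ‖g‖ * (L + 1))).add ((D.tendsto_gapRatio y hD).const_mul (2 * ‖g‖))
  obtain ⟨M, hM⟩ := eventually_atTop.1 (herr.eventually_lt_const (half_pos hε))
  refine ⟨D.lenA y (M + 1) + 1, fun N hN => ?_⟩
  have hlevel := D.lt_level_of_lenA_lt y (show D.lenA y (M + 1) < N by omega)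
  obtain ⟨m, hm⟩ : ∃ m, D.level y N = m + 2 := ⟨D.level y N - 2, by omega⟩
  have hN₁ : D.lenA y (m + 1) < N := D.lenA_lt_of_lt_level y (by omega)
  have hN₂ : N ≤ D.lenA y (m + 2) := hm ▸ D.le_lenA_level y N
  rw [Real.dist_eq, sub_zero, hm]
  linarith [D.abs_birkhoffSum_T_div_sub_le y hG hL hN₁ hN₂, hM m (by omega)]

end TData

theorem T_preserves_empirical_limit_points_general (k : ℕ) (P : Set (ℕ → Fin k))
    (D : TData k P) (hD : D.Small) (y : ℕ → Fin k) :
    VSet (D.T y) = VSet y := by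
  ext μ
  exact and_congr_right fun _ => exists_subseq_tendsto_iff_of_tendsto_sub
    (A := fun (g : C(ℕ → Fin k, ℝ)) N => birkhoffSum shift g N (D.T y) / N)
    (B := fun (g : C(ℕ → Fin k, ℝ)) N => birkhoffSum shift g N y / N)
    (D.strictMono_lenA y) (D.level_lenA y) (D.tendsto_level y)
    (D.tendsto_birkhoffSum_T_div_sub_birkhoffSum_level_div y (hD y))

/-- **Proposition.** For a proper subshift `P ⊊ Σ_k` and the map `T` constructed from `P`,
the set of weak* limit points of the empirical measures of `T(y)` coincides with that
of `y`: `V(T(y), σ) = V(y, σ)` for every `y ∈ P`. -/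
theorem T_preserves_empirical_limit_points (k : ℕ) (hk : 2 ≤ k)
    (P : Set (ℕ → Fin k)) (hP : IsSubshift P) (hproper : P ≠ Set.univ)
    (D : TData k P) (hD : D.Small) (y : ℕ → Fin k) (hy : y ∈ P) :
    VSet (D.T y) = VSet y :=
  T_preserves_empirical_limit_points_general k P D hD y
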